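/- Let c_0 > 0 and m_0 in N, and let f : D cap [0,1] -> R be a function on the dyadic rationals in [0,1] such that for every m >= m_0 and every j in {0, 1, ..., 2^m - 1}, |f((j+1) 2^{-m}) - f(j 2^{-m})| <= c_0 2^{-2m/3} (log 2^m)^{1/3}. Then there is a constant C (depending only on c_0) such that for all dyadic s, t in [0,1] with 0 < t - s <= 2^{-m_0}, |f(t) - f(s)| <= C (t-s)^{2/3} (log (t-s)^{-1})^{1/3}. -/

import Mathlib

/-!
Lévy's chaining. Put dyadic `s < t` on a common fine grid and walk from `s` to `t`, rounding
inwards to the next coarser grid at every level: each level `k` costs at most two grid steps,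
down to the level `m` with `2^-(m+1) < t - s ≤ 2^-m`, where one step remains. With
`φ(u) = u^(2/3) (log u⁻¹)^(1/3)` (`logHolderModulus`), the grid bounds `c₀ φ(2^-k)` decay
geometrically in `k ≥ 1` (ratio `≤ 2^(-1/3)`), so the whole chain costs
`O(φ(2^-m)) = O(φ(t - s))`.

This fails for `t - s > 1/2` (possible only when `m₀ = 0`), where `φ(t - s)` vanishes as
`t - s → 1`. There the level-`0` bound `c₀ φ(1) = 0` forces `f 1 = f 0`, and one chains from
`s` down to `0` and from `t` up to `1` instead, using `φ(u) ≤ u^(1/3)` and `log u⁻¹ ≥ 1 - u`.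
-/

open Finset Real

lemma sum_range_le_of_le_mul {u : ℕ → ℝ} {r : ℝ} (hr0 : 0 ≤ r) (hr1 : r < 1)
    (hu0 : 0 ≤ u 0) (hu : ∀ k, u (k + 1) ≤ r * u k) (n : ℕ) : ∑ k ∈ range n, u k ≤ u 0 / (1 - r) :=
  calc ∑ k ∈ range n, u k ≤ ∑ k ∈ range n, r ^ k * u 0 :=
        sum_le_sum fun k _ => le_geom hr0 k fun i _ => hu i
    _ = (∑ k ∈ range n, r ^ k) * u 0 := (Finset.sum_mul _ _ _).symm
    _ ≤ 1 / (1 - r) * u 0 := by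
        refine mul_le_mul_of_nonneg_right ?_ hu0
        have := geom_sum_Ico_le_of_lt_one hr0 hr1 (m := 0) (n := n)
        rwa [← range_eq_Ico, pow_zero] at this
    _ = u 0 / (1 - r) := one_div_mul_eq_div _ _

lemma log_inv_nonneg {u : ℝ} (hu0 : 0 ≤ u) (hu1 : u ≤ 1) : 0 ≤ log u⁻¹ := by
  rw [log_inv]
  exact neg_nonneg.mpr (log_nonpos hu0 hu1)

noncomputable def logHolderModulus (u : ℝ) : ℝ :=
  u ^ ((2:ℝ) / 3) * (log u⁻¹) ^ ((1:ℝ) / 3)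

lemma logHolderModulus_inv_two_pow (k : ℕ) :
    logHolderModulus ((2 ^ k)⁻¹) =
      (2:ℝ) ^ (-(2 * (k:ℝ)) / 3) * (log (2 ^ k)) ^ ((1:ℝ) / 3) := by
  rw [logHolderModulus, inv_inv, inv_rpow (by positivity), ← rpow_natCast,
    ← rpow_mul (by norm_num), ← rpow_neg (by norm_num)]
  ring_nf

lemma logHolderModulus_nonneg {u : ℝ} (hu0 : 0 ≤ u) (hu1 : u ≤ 1) :
    0 ≤ logHolderModulus u := by
  have := log_inv_nonneg hu0 hu1
  unfold logHolderModulus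
  positivity

lemma logHolderModulus_le_rpow {u : ℝ} (hu0 : 0 < u) (hu1 : u ≤ 1) :
    logHolderModulus u ≤ u ^ ((1:ℝ) / 3) := by
  have hL := log_inv_nonneg hu0.le hu1
  have hsq : u ^ ((2:ℝ) / 3) = (u ^ 2) ^ ((1:ℝ) / 3) := by
    rw [← rpow_natCast, ← rpow_mul hu0.le]
    norm_num
  rw [logHolderModulus, hsq, ← mul_rpow (by positivity) hL]
  gcongr
  calc u ^ 2 * log u⁻¹ ≤ u ^ 2 * u⁻¹ := by
        gcongr
        linarith [log_le_sub_one_of_pos (inv_pos.mpr hu0)]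
    _ = u := by field_simp

lemma one_sub_rpow_le_logHolderModulus {u : ℝ} (hu0 : 1 / 2 ≤ u) (hu1 : u ≤ 1) :
    (1 - u) ^ ((1:ℝ) / 3) ≤ 2 * logHolderModulus u := by
  have hupos : 0 < u := by linarith
  have hL : 1 - u ≤ log u⁻¹ := by
    rw [log_inv]
    linarith [log_le_sub_one_of_pos hupos]
  have hu : u ≤ u ^ ((2:ℝ) / 3) := by
    simpa using rpow_le_rpow_of_exponent_ge hupos hu1 (by norm_num : (2:ℝ) / 3 ≤ 1)
  calc (1 - u) ^ ((1:ℝ) / 3) ≤ (log u⁻¹) ^ ((1:ℝ) / 3) := by gcongr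
    _ ≤ 2 * u ^ ((2:ℝ) / 3) * (log u⁻¹) ^ ((1:ℝ) / 3) := by
        have := rpow_nonneg (log_inv_nonneg hupos.le hu1) ((1:ℝ) / 3)
        nlinarith
    _ = 2 * logHolderModulus u := by rw [logHolderModulus, mul_assoc]

lemma logHolderModulus_le_two_mul {x u : ℝ} (hu0 : 0 < u) (hxu : x / 2 ≤ u) (hux : u ≤ x)
    (hx1 : x ≤ 1) : logHolderModulus x ≤ 2 * logHolderModulus u := by
  have hpow : x ^ ((2:ℝ) / 3) ≤ 2 * u ^ ((2:ℝ) / 3) :=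
    calc x ^ ((2:ℝ) / 3) ≤ (2 * u) ^ ((2:ℝ) / 3) := by gcongr <;> linarith
      _ = 2 ^ ((2:ℝ) / 3) * u ^ ((2:ℝ) / 3) := mul_rpow (by norm_num) hu0.le
      _ ≤ 2 * u ^ ((2:ℝ) / 3) := by
          gcongr
          simpa using rpow_le_rpow_of_exponent_le (by norm_num : (1:ℝ) ≤ 2)
            (by norm_num : (2:ℝ) / 3 ≤ 1)
  have hLx := log_inv_nonneg (by linarith) hx1
  have hlog : (log x⁻¹) ^ ((1:ℝ) / 3) ≤ (log u⁻¹) ^ ((1:ℝ) / 3) :=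
    rpow_le_rpow hLx (log_le_log (inv_pos.mpr (by linarith)) (inv_anti₀ hu0 hux)) (by norm_num)
  calc logHolderModulus x ≤ 2 * u ^ ((2:ℝ) / 3) * (log u⁻¹) ^ ((1:ℝ) / 3) :=
        mul_le_mul hpow hlog (rpow_nonneg hLx _) (by positivity)
    _ = 2 * logHolderModulus u := by rw [logHolderModulus, mul_assoc]

lemma logHolderModulus_half_le {x : ℝ} (hx0 : 0 < x) (hx : x ≤ 1 / 2) :
    logHolderModulus (x / 2) ≤ 4 / 5 * logHolderModulus x := by
  set a : ℝ := 2 ^ ((1:ℝ) / 3)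
  have ha3 : a ^ 3 = 2 := by
    rw [← rpow_natCast, ← rpow_mul (by norm_num)]
    norm_num
  have ha2 : (2:ℝ) ^ ((2:ℝ) / 3) = a ^ 2 := by
    rw [← rpow_natCast, ← rpow_mul (by norm_num)]
    norm_num
  have ha : 5 / 4 ≤ a := by nlinarith [rpow_pos_of_pos (by norm_num : (0:ℝ) < 2) ((1:ℝ) / 3)]
  have hL : 0 ≤ log x⁻¹ := log_inv_nonneg hx0.le (by linarith)
  have hL2 : 0 ≤ log (x / 2)⁻¹ := log_inv_nonneg (by positivity) (by linarith)
  have hlog : log (x / 2)⁻¹ ≤ 2 * log x⁻¹ := by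
    have h2 : log 2 ≤ log x⁻¹ :=
      log_le_log (by norm_num) (by rw [le_inv_comm₀ (by norm_num) hx0]; linarith)
    rw [inv_div, div_eq_mul_inv, log_mul (by norm_num) (by positivity)]
    linarith
  calc logHolderModulus (x / 2)
      ≤ x ^ ((2:ℝ) / 3) / a ^ 2 * (a * (log x⁻¹) ^ ((1:ℝ) / 3)) := by
        rw [logHolderModulus, div_rpow hx0.le (by norm_num), ha2, ← mul_rpow (by norm_num) hL]
        gcongr
    _ = 1 / a * logHolderModulus x := by
        rw [logHolderModulus]
        field_simp
    _ ≤ 4 / 5 * logHolderModulus x := by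
        refine mul_le_mul_of_nonneg_right ?_ (logHolderModulus_nonneg hx0.le (by linarith))
        rw [div_le_iff₀ (by positivity)]
        linarith

lemma sum_logHolderModulus_inv_two_pow_le {m : ℕ} (hm : 1 ≤ m) (n : ℕ) :
    ∑ j ∈ range n, logHolderModulus ((2 ^ (m + j))⁻¹) ≤
      5 * logHolderModulus ((2 ^ m)⁻¹) := by
  have hratio (k : ℕ) : logHolderModulus ((2 ^ (m + (k + 1)))⁻¹)
      ≤ 4 / 5 * logHolderModulus ((2 ^ (m + k))⁻¹) := by
    have hk : ((2:ℝ) ^ (m + k))⁻¹ ≤ 1 / 2 := by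
      rw [one_div]
      exact inv_anti₀ two_pos (le_self_pow₀ one_le_two (by omega))
    have := logHolderModulus_half_le (by positivity) hk
    rwa [← add_assoc, pow_succ, mul_inv, ← div_eq_mul_inv]
  have h0 := logHolderModulus_nonneg (u := (2 ^ m)⁻¹) (by positivity)
    (inv_le_one_of_one_le₀ (one_le_pow₀ one_le_two))
  have := sum_range_le_of_le_mul (u := fun j => logHolderModulus ((2 ^ (m + j))⁻¹))
    (by norm_num) (by norm_num) h0 hratio n
  exact this.trans_eq (by norm_num; ring)

lemma exists_inv_two_pow_lt_le {u : ℝ} (hu0 : 0 < u) (hu1 : u ≤ 1) :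
    ∃ m : ℕ, ((2:ℝ) ^ (m + 1))⁻¹ < u ∧ u ≤ ((2:ℝ) ^ m)⁻¹ := by
  obtain ⟨m, hle, hlt⟩ := exists_nat_pow_near (one_le_inv₀ hu0 |>.mpr hu1) one_lt_two
  exact ⟨m, (inv_lt_comm₀ (by positivity) hu0).mpr hlt,
    (le_inv_comm₀ hu0 (by positivity)).mpr hle⟩

def IsDyadic (x : ℝ) : Prop := ∃ (i : ℕ) (z : ℤ), x = z / 2 ^ i

lemma exists_nat_eq_div_two_pow {x : ℝ} {i : ℕ} {z : ℤ} (hx : x = z / 2 ^ i) (hx0 : 0 ≤ x)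
    {N : ℕ} (hiN : i ≤ N) : ∃ a : ℕ, x = a / 2 ^ N := by
  have hz : (0:ℝ) ≤ z := by
    have := mul_nonneg hx0 (pow_nonneg zero_le_two i)
    rwa [hx, div_mul_cancel₀ _ (by positivity)] at this
  have hz' : ((z.toNat : ℕ) : ℝ) = z := by
    exact_mod_cast Int.toNat_of_nonneg (by exact_mod_cast hz)
  refine ⟨z.toNat * 2 ^ (N - i), ?_⟩
  rw [hx, ← Nat.add_sub_of_le hiN]
  push_cast [hz']
  rw [Nat.add_sub_cancel_left, pow_add]
  field_simp

def DyadicIncrementsLE (f : ℝ → ℝ) (g : ℕ → ℝ) (m : ℕ) : Prop :=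
  ∀ k, m ≤ k → ∀ j : ℕ, j < 2 ^ k →
    |f (((j : ℝ) + 1) / 2 ^ k) - f ((j : ℝ) / 2 ^ k)| ≤ g k

section GridChaining

variable {f : ℝ → ℝ} {g : ℕ → ℝ} {m : ℕ}

lemma cast_two_mul_div_two_pow_succ (x n : ℕ) :
    ((2 * x : ℕ) : ℝ) / 2 ^ (n + 1) = (x : ℝ) / 2 ^ n := by
  push_cast
  rw [pow_succ]
  field_simp

lemma abs_sub_le_of_le_add_one (hf : DyadicIncrementsLE f g m) {k a b : ℕ} (hk : m ≤ k)
    (hab : a ≤ b) (hba : b ≤ a + 1) (hb : b ≤ 2 ^ k) :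
    |f ((b : ℝ) / 2 ^ k) - f ((a : ℝ) / 2 ^ k)| ≤ g k := by
  obtain rfl | rfl : b = a ∨ b = a + 1 := by omega
  · simpa using (abs_nonneg _).trans (hf k hk 0 (by positivity))
  · simpa using hf k hk a (by omega)

theorem abs_sub_le_of_grid_increments (hf : DyadicIncrementsLE f g m) (d : ℕ) {a b : ℕ}
    (hab : a ≤ b) (hb : b ≤ 2 ^ (m + d)) (hba : b ≤ a + 2 ^ d) :
    |f ((b : ℝ) / 2 ^ (m + d)) - f ((a : ℝ) / 2 ^ (m + d))| ≤
      2 * ∑ j ∈ range (d + 1), g (m + j) := by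
  have hg : ∀ k, m ≤ k → 0 ≤ g k :=
    fun k hk => (abs_nonneg _).trans (hf k hk 0 (by positivity))
  induction d generalizing a b with
  | zero =>
    simp only [add_zero, pow_zero, zero_add, range_one, sum_singleton] at hb hba ⊢
    linarith [abs_sub_le_of_le_add_one hf le_rfl hab hba hb, hg m le_rfl]
  | succ d ih =>
    obtain rfl | hlt := hab.eq_or_lt
    · simpa using sum_nonneg fun j _ => (hg (m + j) (by omega))
    have hpow : 2 ^ (m + (d + 1)) = 2 * 2 ^ (m + d) := by ring
    have hpow' : 2 ^ (d + 1) = 2 * 2 ^ d := by ring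
    set a' := (a + 1) / 2
    set b' := b / 2
    have hmid := ih (a := a') (b := b') (by omega) (by omega) (by omega)
    rw [← cast_two_mul_div_two_pow_succ a', ← cast_two_mul_div_two_pow_succ b'] at hmid
    have hright := abs_sub_le_of_le_add_one hf (k := m + d + 1) (a := 2 * b') (b := b)
      (by omega) (by omega) (by omega) (by omega)
    have hleft := abs_sub_le_of_le_add_one hf (k := m + d + 1) (a := a) (b := 2 * a')
      (by omega) (by omega) (by omega) (by omega)
    rw [sum_range_succ, ← add_assoc m d 1]
    set N := m + d + 1
    calc _ ≤ |f ((b : ℝ) / 2 ^ N) - f (((2 * b' : ℕ) : ℝ) / 2 ^ N)|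
          + |f (((2 * b' : ℕ) : ℝ) / 2 ^ N) - f (((2 * a' : ℕ) : ℝ) / 2 ^ N)|
          + |f (((2 * a' : ℕ) : ℝ) / 2 ^ N) - f ((a : ℝ) / 2 ^ N)| :=
          (abs_sub_le _ _ _).trans (add_le_add_left (abs_sub_le _ _ _) _)
      _ ≤ _ := by linarith

theorem abs_sub_le_of_dyadic_of_grid_increments {B : ℝ} (hf : DyadicIncrementsLE f g m)
    (hB : ∀ n, ∑ j ∈ range n, g (m + j) ≤ B) {s t : ℝ} (hs : IsDyadic s) (ht : IsDyadic t)
    (hs0 : 0 ≤ s) (hst : s ≤ t) (ht1 : t ≤ 1) (hgap : t - s ≤ ((2:ℝ) ^ m)⁻¹) :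
    |f t - f s| ≤ 2 * B := by
  obtain ⟨i, z, hz⟩ := hs
  obtain ⟨i', w, hw⟩ := ht
  obtain ⟨a, rfl⟩ := exists_nat_eq_div_two_pow hz hs0 (N := m + (i + i')) (by omega)
  obtain ⟨b, rfl⟩ := exists_nat_eq_div_two_pow hw (hs0.trans hst) (N := m + (i + i')) (by omega)
  set d := i + i'
  have h2 : (0:ℝ) < 2 ^ (m + d) := by positivity
  have hab : a ≤ b := by exact_mod_cast (div_le_div_iff_of_pos_right h2).mp hst
  have hb : b ≤ 2 ^ (m + d) := by exact_mod_cast (div_le_one h2).mp ht1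
  have hba : b ≤ a + 2 ^ d := by
    rw [← sub_div, div_le_iff₀ h2, pow_add, inv_mul_cancel_left₀ (by positivity)] at hgap
    exact_mod_cast (by linarith : (b:ℝ) ≤ a + 2 ^ d)
  exact (abs_sub_le_of_grid_increments hf d hab hb hba).trans (by linarith [hB (d + 1)])

end GridChaining

section Modulus

variable {c₀ : ℝ} {f : ℝ → ℝ} {s t : ℝ}

theorem abs_sub_le_logHolderModulus_of_sub_le_half {m₀ : ℕ} (hc₀ : 0 ≤ c₀)
    (hf : DyadicIncrementsLE f (fun k => c₀ * logHolderModulus ((2 ^ k)⁻¹)) m₀)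
    (hs : IsDyadic s) (ht : IsDyadic t)
    (hs0 : 0 ≤ s) (ht1 : t ≤ 1) (hpos : 0 < t - s) (hhalf : t - s ≤ 1 / 2)
    (hgap : t - s ≤ ((2:ℝ) ^ m₀)⁻¹) :
    |f t - f s| ≤ 20 * c₀ * logHolderModulus (t - s) := by
  obtain ⟨m, hlow, hup⟩ := exists_inv_two_pow_lt_le hpos (by linarith)
  have hm : 1 ≤ m := by
    by_contra! h
    obtain rfl : m = 0 := by omega
    norm_num at hlow
    linarith
  have hm₀ : m₀ ≤ m := by
    have : (2:ℝ) ^ m₀ < 2 ^ (m + 1) := (inv_lt_inv₀ (by positivity) (by positivity)).mp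
      (hlow.trans_le hgap)
    have := (pow_lt_pow_iff_right₀ one_lt_two).mp this
    omega
  have hsum (n : ℕ) : ∑ j ∈ range n, c₀ * logHolderModulus ((2 ^ (m + j))⁻¹)
      ≤ c₀ * (5 * logHolderModulus ((2 ^ m)⁻¹)) := by
    rw [← mul_sum]
    exact mul_le_mul_of_nonneg_left (sum_logHolderModulus_inv_two_pow_le hm n) hc₀
  have hchain := abs_sub_le_of_dyadic_of_grid_increments (fun k hk => hf k (hm₀.trans hk)) hsum
    hs ht hs0 (by linarith) ht1 hup
  rw [pow_succ, mul_inv, ← div_eq_mul_inv] at hlow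
  have hscale : logHolderModulus ((2 ^ m)⁻¹) ≤ 2 * logHolderModulus (t - s) :=
    logHolderModulus_le_two_mul hpos hlow.le hup
      (inv_le_one_of_one_le₀ (one_le_pow₀ one_le_two))
  calc |f t - f s| ≤ 2 * (c₀ * (5 * logHolderModulus ((2 ^ m)⁻¹))) := hchain
    _ ≤ 2 * (c₀ * (5 * (2 * logHolderModulus (t - s)))) := by gcongr
    _ = 20 * c₀ * logHolderModulus (t - s) := by ring

theorem abs_sub_le_rpow_of_sub_le_half (hc₀ : 0 ≤ c₀)
    (hf : DyadicIncrementsLE f (fun k => c₀ * logHolderModulus ((2 ^ k)⁻¹)) 0)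
    (hs : IsDyadic s) (ht : IsDyadic t)
    (hs0 : 0 ≤ s) (hst : s ≤ t) (ht1 : t ≤ 1)
    (hhalf : t - s ≤ 1 / 2) : |f t - f s| ≤ 20 * c₀ * (t - s) ^ ((1:ℝ) / 3) := by
  obtain rfl | hlt := hst.eq_or_lt
  · simp only [sub_self, abs_zero]
    positivity
  have hpos : 0 < t - s := sub_pos.mpr hlt
  calc |f t - f s| ≤ 20 * c₀ * logHolderModulus (t - s) :=
        abs_sub_le_logHolderModulus_of_sub_le_half hc₀ hf hs ht hs0 ht1 hpos
          hhalf (by norm_num; linarith)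
    _ ≤ 20 * c₀ * (t - s) ^ ((1:ℝ) / 3) := by
        gcongr
        exact logHolderModulus_le_rpow hpos (by linarith)

theorem abs_sub_le_logHolderModulus_of_half_lt_sub (hc₀ : 0 ≤ c₀)
    (hf : DyadicIncrementsLE f (fun k => c₀ * logHolderModulus ((2 ^ k)⁻¹)) 0)
    (hs : IsDyadic s) (ht : IsDyadic t)
    (hs0 : 0 ≤ s) (ht1 : t ≤ 1)
    (hlarge : 1 / 2 < t - s) : |f t - f s| ≤ 80 * c₀ * logHolderModulus (t - s) := by
  have hdyadic0 : IsDyadic 0 := ⟨0, 0, by norm_num⟩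
  have hdyadic1 : IsDyadic 1 := ⟨0, 1, by norm_num⟩
  have h10 : f 1 = f 0 := by
    have := hf 0 le_rfl 0 one_pos
    norm_num [logHolderModulus] at this
    linarith
  have hleft := abs_sub_le_rpow_of_sub_le_half hc₀ hf hdyadic0 hs le_rfl (by linarith)
    (by linarith) (by linarith)
  have hright := abs_sub_le_rpow_of_sub_le_half hc₀ hf ht hdyadic1 (by linarith) ht1 le_rfl
    (by linarith)
  rw [sub_zero] at hleft
  have hsε : s ^ ((1:ℝ) / 3) ≤ (1 - (t - s)) ^ ((1:ℝ) / 3) :=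
    rpow_le_rpow hs0 (by linarith) (by norm_num)
  have htε : (1 - t) ^ ((1:ℝ) / 3) ≤ (1 - (t - s)) ^ ((1:ℝ) / 3) :=
    rpow_le_rpow (by linarith) (by linarith) (by norm_num)
  have hε := one_sub_rpow_le_logHolderModulus hlarge.le (by linarith)
  calc |f t - f s| = |(f s - f 0) + (f 1 - f t)| := by rw [← abs_neg, h10]; ring_nf
    _ ≤ |f s - f 0| + |f 1 - f t| := abs_add_le _ _
    _ ≤ 20 * c₀ * (1 - (t - s)) ^ ((1:ℝ) / 3) + 20 * c₀ * (1 - (t - s)) ^ ((1:ℝ) / 3) := by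
        gcongr
        · exact hleft.trans (by gcongr)
        · exact hright.trans (by gcongr)
    _ ≤ 80 * c₀ * logHolderModulus (t - s) := by nlinarith

end Modulus

/-- Chaining step: dyadic-grid increment bounds yield a modulus of continuity of
order `(t-s)^{2/3} (log (t-s)⁻¹)^{1/3}` on dyadic pairs. -/
theorem stmt_9 (c₀ : ℝ) (hc₀ : 0 < c₀) :
    ∃ C : ℝ, 0 < C ∧ ∀ (m₀ : ℕ) (f : ℝ → ℝ),
      (∀ m : ℕ, m₀ ≤ m → ∀ j : ℕ, j < 2 ^ m →
        |f (((j : ℝ) + 1) / 2 ^ m) - f ((j : ℝ) / 2 ^ m)| ≤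
          c₀ * (2:ℝ) ^ (-(2 * (m : ℝ)) / 3) * (Real.log (2 ^ m)) ^ ((1:ℝ)/3)) →
      ∀ s t : ℝ, (∃ (i : ℕ) (z : ℤ), s = (z : ℝ) / 2 ^ i) →
        (∃ (i : ℕ) (z : ℤ), t = (z : ℝ) / 2 ^ i) →
        s ∈ Set.Icc (0:ℝ) 1 → t ∈ Set.Icc (0:ℝ) 1 →
        0 < t - s → t - s ≤ (2:ℝ) ^ (-(m₀ : ℝ)) →
        |f t - f s| ≤ C * (t - s) ^ ((2:ℝ)/3) * (Real.log (t - s)⁻¹) ^ ((1:ℝ)/3) := by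
  refine ⟨80 * c₀, by positivity, ?_⟩
  rintro m₀ f hf s t hs ht ⟨hs0, -⟩ ⟨-, ht1⟩ hpos hgap
  simp only [mul_assoc, ← logHolderModulus_inv_two_pow] at hf
  rw [rpow_neg zero_le_two, rpow_natCast] at hgap
  rw [mul_assoc]
  change _ ≤ 80 * c₀ * logHolderModulus (t - s)
  rcases le_or_gt (t - s) (1 / 2) with hsmall | hlarge
  · calc |f t - f s| ≤ 20 * c₀ * logHolderModulus (t - s) :=
          abs_sub_le_logHolderModulus_of_sub_le_half hc₀.le hf hs ht hs0 ht1 hpos hsmall hgap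
      _ ≤ 80 * c₀ * logHolderModulus (t - s) := by
          gcongr
          · exact logHolderModulus_nonneg hpos.le (by linarith)
          · norm_num
  · obtain rfl : m₀ = 0 := by
      have : (2:ℝ) ^ m₀ < 2 ^ 1 := by
        rw [pow_one, ← inv_lt_inv₀ two_pos (by positivity)]
        linarith
      have := (pow_lt_pow_iff_right₀ one_lt_two).mp this
      omega
    exact abs_sub_le_logHolderModulus_of_half_lt_sub hc₀.le hf hs ht hs0 ht1
      hlarge
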